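/- Let G be a multigraph, let e ∈ E_G(x,y) be a k-critical edge with k ≥ Δ(G), let φ be a k-edge-coloring of G−e, and let F = (x, e, y_0, e_1, y_1, …, e_p, y_p) with y_0 = y be a multi-fan at x with respect to e and φ. Then V(F) is φ-elementary, and every edge in E(F) is a k-critical edge of G. -/

import Mathlib

/-- A finite multigraph: finite vertex and edge types, each edge has an unordered pair of
endvertices, and there are no loops. -/
structure Multigraph where
  V : Type
  E : Type
  [fintypeV : Fintype V]
  [fintypeE : Fintype E]
  ends : E → Sym2 V
  loopless : ∀ e, ¬ (ends e).IsDiag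

attribute [instance] Multigraph.fintypeV Multigraph.fintypeE

namespace Multigraph

section Basic

variable (G : Multigraph)

/-- The degree of a vertex: the number of edges incident with it. -/
noncomputable def degree (v : G.V) : ℕ := {e : G.E | v ∈ G.ends e}.ncard

/-- The maximum degree Δ(G). -/
noncomputable def maxDegree : ℕ := sSup (Set.range G.degree)

/-- The number of edges joining `x` and `y` (the multiplicity e_G(x,y)). -/
noncomputable def mult (x y : G.V) : ℕ := {e : G.E | G.ends e = s(x, y)}.ncard

/-- The maximum multiplicity μ(G). -/
noncomputable def maxMult : ℕ := sSup {m : ℕ | ∃ x y : G.V, G.mult x y = m}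

/-- `c` is a proper edge coloring, with palette `{1,…,k}`, of the edges in `D`
(edges sharing an endvertex get distinct colors). -/
def IsProperColoringOn (k : ℕ) (D : Set G.E) (c : G.E → ℕ) : Prop :=
  (∀ e ∈ D, c e ∈ Set.Icc 1 k) ∧
  ∀ e ∈ D, ∀ f ∈ D, e ≠ f → (∃ v, v ∈ G.ends e ∧ v ∈ G.ends f) → c e ≠ c f

/-- A proper `k`-edge-coloring of all of `G`. -/
def IsProperColoring (k : ℕ) (c : G.E → ℕ) : Prop := G.IsProperColoringOn k Set.univ c

/-- The chromatic index of the subgraph of `G` consisting of the edges in `D`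
(vertices are irrelevant for edge colorings). -/
noncomputable def chromIndexOn (D : Set G.E) : ℕ := sInf {k | ∃ c, G.IsProperColoringOn k D c}

/-- The chromatic index χ'(G). -/
noncomputable def chromIndex : ℕ := G.chromIndexOn Set.univ

/-- The set of colors of the palette `{1,…,k}` missing at `v`, where only the edges in `D`
are regarded as colored. -/
def missingOn (k : ℕ) (D : Set G.E) (c : G.E → ℕ) (v : G.V) : Set ℕ :=
  {i | i ∈ Set.Icc 1 k ∧ ∀ e ∈ D, v ∈ G.ends e → c e ≠ i}

/-- `X` is elementary: missing-color sets of distinct vertices of `X` are disjoint. -/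
def IsElementaryOn (k : ℕ) (D : Set G.E) (c : G.E → ℕ) (X : Set G.V) : Prop :=
  ∀ u ∈ X, ∀ v ∈ X, u ≠ v → G.missingOn k D c u ∩ G.missingOn k D c v = ∅

/-- The boundary ∂_G(X): edges with an endvertex in `X` and an endvertex outside `X`. -/
def boundary (X : Set G.V) : Set G.E :=
  {e | (∃ v ∈ G.ends e, v ∈ X) ∧ (∃ v ∈ G.ends e, v ∉ X)}

/-- `X` is strongly closed (w.r.t. the coloring `c` of the edges in `D`): every color on a
boundary edge of `X` is present at every vertex of `X`, and the colors on the boundary edges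
are pairwise distinct. -/
def IsStronglyClosedOn (D : Set G.E) (c : G.E → ℕ) (X : Set G.V) : Prop :=
  (∀ e ∈ G.boundary X ∩ D, ∀ v ∈ X, ∃ f ∈ D, v ∈ G.ends f ∧ c f = c e) ∧
  ∀ e ∈ G.boundary X ∩ D, ∀ f ∈ G.boundary X ∩ D, e ≠ f → c e ≠ c f

end Basic

/-- A subgraph of `G`: a set of vertices together with a set of edges all of whose
endvertices belong to the vertex set. -/
structure Subgraph (G : Multigraph) where
  verts : Set G.V
  edges : Set G.E
  support : ∀ e ∈ edges, ∀ v, v ∈ G.ends e → v ∈ verts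

section Sub

variable (G : Multigraph)

/-- The whole graph, as a subgraph of itself. -/
def top : G.Subgraph := ⟨Set.univ, Set.univ, fun _ _ _ _ => Set.mem_univ _⟩

/-- `H` is a `k`-dense subgraph: it has an odd number of vertices and
`|E(H)| = (|V(H)|-1)·k/2`. -/
def IsDense (k : ℕ) (H : G.Subgraph) : Prop :=
  Odd H.verts.ncard ∧ 2 * H.edges.ncard = (H.verts.ncard - 1) * k

/-- `H` is a `k`-dense subgraph of `G - F` (the graph obtained by deleting the edges of `F`). -/
def IsDenseIn (F : Set G.E) (k : ℕ) (H : G.Subgraph) : Prop :=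
  H.edges ∩ F = ∅ ∧ G.IsDense k H

/-- `H` is a maximal `k`-dense subgraph of `G - F`. -/
def IsMaximalDenseIn (F : Set G.E) (k : ℕ) (H : G.Subgraph) : Prop :=
  G.IsDenseIn F k H ∧
  ∀ H' : G.Subgraph, G.IsDenseIn F k H' → H.verts ⊆ H'.verts → H.edges ⊆ H'.edges →
    H.verts = H'.verts ∧ H.edges = H'.edges

/-- The density Γ(H) of a subgraph `H` of `G`:
`max { 2|E(H')|/(|V(H')|-1) : H' ⊆ H, |V(H')| ≥ 3 odd }` (and `0` if there is no such `H'`,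
since in `ℝ` the supremum of the empty set is `0`). -/
noncomputable def densityOf (H : G.Subgraph) : ℝ :=
  sSup {x : ℝ | ∃ H' : G.Subgraph, H'.verts ⊆ H.verts ∧ H'.edges ⊆ H.edges ∧
    3 ≤ H'.verts.ncard ∧ Odd H'.verts.ncard ∧
    x = 2 * (H'.edges.ncard : ℝ) / ((H'.verts.ncard : ℝ) - 1)}

/-- The density Γ(G). -/
noncomputable def density : ℝ := G.densityOf G.top

/-- `e` is a `k`-critical edge of `G`: `χ'(G-e) = k < χ'(G) = k+1`. -/
def IsCriticalEdge (k : ℕ) (e : G.E) : Prop :=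
  G.chromIndexOn {e}ᶜ = k ∧ G.chromIndex = k + 1

/-- Degree of `v` in the subgraph consisting of the edges in `D`. -/
noncomputable def degreeOn (D : Set G.E) (v : G.V) : ℕ := {e : G.E | e ∈ D ∧ v ∈ G.ends e}.ncard

/-- Maximum degree of the subgraph consisting of the edges in `D`. -/
noncomputable def maxDegreeOn (D : Set G.E) : ℕ := sSup (Set.range (G.degreeOn D))

/-- Multiplicity of the pair `x,y` in the subgraph consisting of the edges in `D`. -/
noncomputable def multOn (D : Set G.E) (x y : G.V) : ℕ :=
  {e : G.E | e ∈ D ∧ G.ends e = s(x, y)}.ncard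

/-- Maximum multiplicity of the subgraph consisting of the edges in `D`. -/
noncomputable def maxMultOn (D : Set G.E) : ℕ := sSup {m : ℕ | ∃ x y : G.V, G.multOn D x y = m}

/-- The simple graph underlying the subgraph of `G` with edge set `D`. -/
def simpleOn (D : Set G.E) : SimpleGraph G.V where
  Adj a b := a ≠ b ∧ ∃ e ∈ D, G.ends e = s(a, b)
  symm := ⟨by
    rintro a b ⟨hab, e, he, hh⟩
    exact ⟨hab.symm, e, he, hh.trans Sym2.eq_swap⟩⟩
  loopless := ⟨by rintro a ⟨h, -⟩; exact h rfl⟩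

/-- The diameter (in `ℕ∞`) of the subgraph with vertex set `S` and edge set `D`:
the greatest distance between a pair of its vertices. -/
noncomputable def diamOn (S : Set G.V) (D : Set G.E) : ℕ∞ :=
  sSup {d : ℕ∞ | ∃ u ∈ S, ∃ v ∈ S, (G.simpleOn D).edist u v = d}

/-- The distance (in `ℕ∞`) between two edges of `G`: the length of a shortest path connecting
an endvertex of `e` and an endvertex of `f`. -/
noncomputable def edgeDist (e f : G.E) : ℕ∞ :=
  sInf {d : ℕ∞ | ∃ u v : G.V, u ∈ G.ends e ∧ v ∈ G.ends f ∧
    (G.simpleOn Set.univ).edist u v = d}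

/-- A matching: a set of edges no two of which share an endvertex. -/
def IsMatching (M : Set G.E) : Prop :=
  ∀ e ∈ M, ∀ f ∈ M, e ≠ f → ∀ v : G.V, v ∈ G.ends e → v ∉ G.ends f

/-- An edge `e ∈ E_G(x,y)` is fully `G`-saturated if `d_G(x) = d_G(y) = Δ(G)` and
`e_G(x,y) = μ(G)`. -/
def IsFullySaturated (e : G.E) : Prop :=
  ∃ x y : G.V, G.ends e = s(x, y) ∧ G.degree x = G.maxDegree ∧ G.degree y = G.maxDegree ∧
    G.mult x y = G.maxMult

/-- One step along a Kempe `(α,β)`-chain: an edge of `D` colored `α` or `β` joining the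
two vertices. -/
def chainStep (D : Set G.E) (c : G.E → ℕ) (α β : ℕ) (a b : G.V) : Prop :=
  ∃ e ∈ D, G.ends e = s(a, b) ∧ (c e = α ∨ c e = β)

/-- `u` and `v` lie on the same `(α,β)`-chain, i.e. `P_u(α,β) = P_v(α,β)`. -/
def sameChain (D : Set G.E) (c : G.E → ℕ) (α β : ℕ) (u v : G.V) : Prop :=
  Relation.ReflTransGen (G.chainStep D c α β) u v

end Sub

/-- The Goldberg–Seymour theorem (proved by Chen, Jing and Zang), as a hypothesis:
every multigraph `G'` with `χ'(G') ≥ Δ(G')+2` satisfies `χ'(G') = ⌈Γ(G')⌉`. -/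
def GoldbergSeymour : Prop :=
  ∀ G' : Multigraph, G'.maxDegree + 2 ≤ G'.chromIndex → (G'.chromIndex : ℤ) = ⌈G'.density⌉

/-- A (general) multi-fan at `x` with respect to the edge `e₀ ∈ E_G(x,y₀)` and the coloring
`c` of the edges in `D` with palette `{1,…,k}`: a sequence `(x, e₀, y₀, e₁, y₁, …, e_p, y_p)`
of vertices and pairwise distinct edges with `e_i ∈ E_G(x, y_i)` and, for `i ≥ 1`,
`c(e_i)` missing at `y_j` for some `j < i`. -/
structure MultiFan (G : Multigraph) (k : ℕ) (D : Set G.E) (c : G.E → ℕ)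
    (x : G.V) (e₀ : G.E) (y₀ : G.V) where
  p : ℕ
  edge : Fin (p + 1) → G.E
  vx : Fin (p + 1) → G.V
  edge_zero : edge 0 = e₀
  vx_zero : vx 0 = y₀
  ends_eq : ∀ i, G.ends (edge i) = s(x, vx i)
  edge_inj : Function.Injective edge
  fan_cond : ∀ i : Fin (p + 1), i ≠ 0 →
    ∃ j : Fin (p + 1), j < i ∧ c (edge i) ∈ G.missingOn k D c (vx j)

namespace MultiFan

variable {G : Multigraph} {k : ℕ} {D : Set G.E} {c : G.E → ℕ} {x : G.V} {e₀ : G.E} {y₀ : G.V}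

/-- The vertex set `V(F)` of a multi-fan. -/
def verts (F : MultiFan G k D c x e₀ y₀) : Set G.V := insert x (Set.range F.vx)

/-- `F` is a subsequence of `F'`. -/
def Subseq (F F' : MultiFan G k D c x e₀ y₀) : Prop :=
  ∃ ι : Fin (F.p + 1) → Fin (F'.p + 1), StrictMono ι ∧
    ∀ i, F'.edge (ι i) = F.edge i ∧ F'.vx (ι i) = F.vx i

/-- `F` is a maximal multi-fan: no multi-fan contains it as a proper subsequence. -/
def IsMaximal (F : MultiFan G k D c x e₀ y₀) : Prop :=
  ∀ F' : MultiFan G k D c x e₀ y₀, F.Subseq F' → F'.p = F.p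

/-- `F` contains no `i`-edge. -/
def NoColor (F : MultiFan G k D c x e₀ y₀) (i : ℕ) : Prop :=
  ∀ j, F.edge j ∈ D → c (F.edge j) ≠ i

/-- `F` is a multi-fan without `i`-edges that is maximal among such. -/
def IsMaximalWithout (F : MultiFan G k D c x e₀ y₀) (i : ℕ) : Prop :=
  F.NoColor i ∧
  ∀ F' : MultiFan G k D c x e₀ y₀, F'.NoColor i → F.Subseq F' → F'.p = F.p

/-- `e_F(x,z)`: the number of edges of the multi-fan `F` joining `x` and `z`. -/
noncomputable def multAt (F : MultiFan G k D c x e₀ y₀) (z : G.V) : ℕ :=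
  Nat.card {j : Fin (F.p + 1) // F.vx j = z}

end MultiFan

end Multigraph

/-!
Every vertex `y_j` of the multi-fan is the end of a linear fan `e = E_0, E_1, …, E_n = e_j` whose
fan condition is always witnessed by the preceding vertex. Shifting colors along it (`E_i` gets
the color of `E_{i+1}`) turns `φ` into a `k`-edge-coloring of `G − e_j`, so `e_j` is critical,
and a color missing at both `x` and `y_j` would extend it to a `k`-edge-coloring of `G`.
If two fan vertices `u ≠ v` missed a common color `α`, pick `β` missing at `x`. Interchanging `α`
and `β` on the `(α,β)`-chain through `u` would leave a linear fan ending at a vertex missing `β`,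
so that chain contains `x`; likewise for `v`. But the chain through `x` is a path with end `x`,
and `u`, `v` would both be its other end.
-/

lemma Set.insert_compl_singleton {α : Type*} (a : α) : insert a ({a}ᶜ : Set α) = Set.univ := by
  ext; simp [em]

lemma Equiv.swap_apply_mem {α : Type*} {s : Set α} [DecidableEq α] {a b x : α} (ha : a ∈ s)
    (hb : b ∈ s) (hx : x ∈ s) : Equiv.swap a b x ∈ s := by
  rw [Equiv.swap_apply_def]
  split_ifs <;> assumption

namespace Relation

variable {V : Type*} {A B : V → V → Prop}

def altStep (A B : V → V → Prop) (n : ℕ) : V → V → Prop := if Even n then A else B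

lemma altStep_add_two (n : ℕ) : altStep A B (n + 2) = altStep A B n := by
  simp [altStep, Nat.even_add]

lemma altStep_eq_or_succ (n : ℕ) : altStep A B n = A ∨ altStep A B (n + 1) = A := by
  rcases Nat.even_or_odd n with h | h
  · simp [altStep, h]
  · simp [altStep, h.add_one]

lemma sup_le_altStep_sup (n : ℕ) : A ⊔ B ≤ altStep A B n ⊔ altStep A B (n + 1) := by
  rcases Nat.even_or_odd n with h | h
  · simp [altStep, h, Nat.even_add_one]
  · simp [altStep, h.add_one, Nat.not_even_iff_odd.mpr h, sup_comm]

lemma altStep_symm (hA : ∀ ⦃p q⦄, A p q → A q p) (hB : ∀ ⦃p q⦄, B p q → B q p) (n : ℕ)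
    {p q : V} (h : altStep A B n p q) : altStep A B n q p := by
  unfold altStep at *
  split_ifs at * with hn
  exacts [hA h, hB h]

lemma altStep_rightUnique (hA : Relator.RightUnique A) (hB : Relator.RightUnique B) (n : ℕ) :
    Relator.RightUnique (altStep A B n) := by
  unfold altStep
  split_ifs
  exacts [hA, hB]

inductive AltWalk (A B : V → V → Prop) (x : V) : ℕ → V → Prop
  | zero : AltWalk A B x 0 x
  | succ {n : ℕ} {v w : V} : AltWalk A B x n v → altStep A B n v w → AltWalk A B x (n + 1) w

namespace AltWalk

variable {x : V}

lemma unique (hA : Relator.RightUnique A) (hB : Relator.RightUnique B) {n : ℕ} {v w : V}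
    (hv : AltWalk A B x n v) (hw : AltWalk A B x n w) : v = w := by
  induction hv generalizing w with
  | zero => cases hw; rfl
  | succ _ hstep ih =>
    cases hw with
    | succ hw' hstep' =>
      obtain rfl := ih hw'
      exact altStep_rightUnique hA hB _ hstep hstep'

lemma exists_of_le {n m : ℕ} {w : V} (hw : AltWalk A B x n w) (hm : m ≤ n) :
    ∃ v, AltWalk A B x m v := by
  induction hw with
  | zero => exact ⟨x, by rw [Nat.le_zero.mp hm]; exact .zero⟩
  | succ hv hstep ih =>
    rcases Nat.lt_or_eq_of_le hm with h | rfl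
    · exact ih (by omega)
    · exact ⟨_, .succ hv hstep⟩

lemma exists_of_reflTransGen (hA : ∀ ⦃p q⦄, A p q → A q p) (hA' : Relator.RightUnique A)
    (hB : ∀ ⦃p q⦄, B p q → B q p) (hB' : Relator.RightUnique B) (hx : ∀ w, ¬ B x w) {w : V}
    (h : ReflTransGen (A ⊔ B) x w) : ∃ n, AltWalk A B x n w := by
  induction h with
  | refl => exact ⟨0, .zero⟩
  | tail _ hstep ih =>
    obtain ⟨n, hn⟩ := ih
    rcases sup_le_altStep_sup n _ _ hstep with h | h
    · exact ⟨n + 1, .succ hn h⟩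
    -- a step against the parity retraces the previous step, by symmetry and uniqueness
    cases hn with
    | zero => exact absurd h (by simpa [altStep] using hx _)
    | succ hu hstep' =>
      rw [altStep_add_two] at h
      obtain rfl := altStep_rightUnique hA' hB' _ (altStep_symm hA hB _ hstep') h
      exact ⟨_, hu⟩

lemma not_succ (hA : ∀ ⦃p q⦄, A p q → A q p) (hA' : Relator.RightUnique A)
    (hB' : Relator.RightUnique B) {n : ℕ} {u w : V} (hu : ∀ w, ¬ A u w) (hux : u ≠ x)
    (h : AltWalk A B x n u) : ¬ AltWalk A B x (n + 1) w := by
  rintro (_ | ⟨hu', hstep⟩)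
  obtain rfl := h.unique hA' hB' hu'
  cases h with
  | zero => exact hux rfl
  | succ _ hstep' =>
    rcases altStep_eq_or_succ (A := A) (B := B) _ with hm | hm
    · rw [hm] at hstep'; exact hu _ (hA hstep')
    · rw [hm] at hstep; exact hu _ hstep

end AltWalk

/-- In the union of two partial matchings `A` and `B`, the component of a vertex `x` unmatched
in `B` is a path starting at `x`, so it contains at most one other vertex unmatched in `A`. -/
theorem eq_of_reflTransGen_sup (hA : ∀ ⦃p q⦄, A p q → A q p) (hA' : Relator.RightUnique A)
    (hB : ∀ ⦃p q⦄, B p q → B q p) (hB' : Relator.RightUnique B) {x u v : V}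
    (hx : ∀ w, ¬ B x w) (hu : ∀ w, ¬ A u w) (hv : ∀ w, ¬ A v w) (hux : u ≠ x) (hvx : v ≠ x)
    (hxu : ReflTransGen (A ⊔ B) x u) (hxv : ReflTransGen (A ⊔ B) x v) : u = v := by
  obtain ⟨n, hn⟩ := AltWalk.exists_of_reflTransGen hA hA' hB hB' hx hxu
  obtain ⟨m, hm⟩ := AltWalk.exists_of_reflTransGen hA hA' hB hB' hx hxv
  obtain rfl : n = m := by
    by_contra hnm
    rcases Nat.lt_or_gt_of_ne hnm with h | h
    · obtain ⟨w, hw⟩ := hm.exists_of_le h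
      exact hn.not_succ hA hA' hB' hu hux hw
    · obtain ⟨w, hw⟩ := hn.exists_of_le h
      exact hm.not_succ hA hA' hB' hv hvx hw
  exact hn.unique hA' hB' hm

end Relation

namespace Multigraph

variable {G : Multigraph} {k : ℕ} {D : Set G.E} {c : G.E → ℕ}

lemma ne_of_ends_eq {e : G.E} {a b : G.V} (h : G.ends e = s(a, b)) : a ≠ b := by
  rintro rfl
  exact G.loopless e (h ▸ Sym2.mk_isDiag_iff.mpr rfl)

lemma degree_le_maxDegree (v : G.V) : G.degree v ≤ G.maxDegree :=
  le_csSup (Set.finite_range G.degree).bddAbove (Set.mem_range_self v)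

lemma missingOn_anti {D' : Set G.E} (hD : D' ⊆ D) (v : G.V) :
    G.missingOn k D c v ⊆ G.missingOn k D' c v :=
  fun _ hγ => ⟨hγ.1, fun e he => hγ.2 e (hD he)⟩

lemma exists_mem_missingOn {v : G.V} (hv : G.degree v ≤ k) {e : G.E} (he : e ∉ D)
    (hve : v ∈ G.ends e) : ∃ γ, γ ∈ G.missingOn k D c v := by
  classical
  set used := Finset.univ.filter (fun f => f ∈ D ∧ v ∈ G.ends f)
  have hused : used.card < k := by
    have hlt : used ⊂ Finset.univ.filter (fun f => v ∈ G.ends f) :=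
      Finset.ssubset_iff_of_subset (fun f hf => by simp_all [used]) |>.mpr
        ⟨e, by simp [hve], by simp [used, he]⟩
    refine (Finset.card_lt_card hlt).trans_le (le_of_eq_of_le ?_ hv)
    rw [degree, ← Set.ncard_coe_finset]; simp
  obtain ⟨γ, hγ, hγused⟩ := Finset.exists_mem_notMem_of_card_lt_card
    (s := used.image c) (t := Finset.Icc 1 k) (by simpa using Finset.card_image_le.trans_lt hused)
  exact ⟨γ, by simpa using hγ, fun f hf hvf hfγ =>
    hγused (Finset.mem_image.mpr ⟨f, by simp [used, hf, hvf], hfγ⟩)⟩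

lemma IsProperColoringOn.subset {D' : Set G.E} (hc : G.IsProperColoringOn k D c) (hD : D' ⊆ D) :
    G.IsProperColoringOn k D' c :=
  ⟨fun e he => hc.1 e (hD he), fun e he f hf => hc.2 e (hD he) f (hD hf)⟩

lemma IsProperColoringOn.mono {k' : ℕ} (hc : G.IsProperColoringOn k D c) (hk : k ≤ k') :
    G.IsProperColoringOn k' D c :=
  ⟨fun e he => ⟨(hc.1 e he).1, (hc.1 e he).2.trans hk⟩, hc.2⟩

lemma IsProperColoringOn.insert_update [DecidableEq G.E] (hc : G.IsProperColoringOn k D c)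
    {f : G.E} {γ : ℕ} (hγ : ∀ v ∈ G.ends f, γ ∈ G.missingOn k D c v) :
    G.IsProperColoringOn k (insert f D) (Function.update c f γ) := by
  obtain ⟨a, ha⟩ : ∃ a, a ∈ G.ends f := ⟨_, Sym2.out_fst_mem _⟩
  refine ⟨fun e he => ?_, fun e he e' he' hne hadj => ?_⟩
  · rcases eq_or_ne e f with rfl | hef
    · simpa using (hγ a ha).1
    · simpa [hef] using hc.1 e (he.resolve_left hef)
  have hcol : ∀ e ∈ D, (∃ v, v ∈ G.ends f ∧ v ∈ G.ends e) → c e ≠ γ :=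
    fun e he ⟨v, hvf, hve⟩ => (hγ v hvf).2 e he hve
  rcases eq_or_ne e f with rfl | hef
  · simpa [hne.symm] using (hcol e' (he'.resolve_left hne.symm) hadj).symm
  rcases eq_or_ne e' f with rfl | he'f
  · obtain ⟨v, hve, hve'⟩ := hadj
    simpa [hef] using hcol e (he.resolve_left hef) ⟨v, hve', hve⟩
  · simpa [hef, he'f] using hc.2 e (he.resolve_left hef) e' (he'.resolve_left he'f) hne hadj

lemma exists_isProperColoringOn (D : Set G.E) : ∃ k c, G.IsProperColoringOn k D c := by
  refine ⟨Fintype.card G.E, fun e => Fintype.equivFin G.E e + 1, fun e _ => ?_,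
    fun e _ f _ hef _ => ?_⟩
  · simp [Nat.succ_le_of_lt (Fin.is_lt _)]
  · simpa [Fin.val_inj] using (Fintype.equivFin G.E).injective.ne hef

lemma chromIndexOn_insert_le (f : G.E) (D : Set G.E) :
    G.chromIndexOn (insert f D) ≤ G.chromIndexOn D + 1 := by
  classical
  obtain ⟨c, hc⟩ : ∃ c, G.IsProperColoringOn (G.chromIndexOn D) D c :=
    Nat.sInf_mem (exists_isProperColoringOn D)
  -- the fresh color `χ'(D) + 1` is missing everywhere
  refine Nat.sInf_le ⟨_, (hc.mono (Nat.le_succ _)).insert_update fun v _ =>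
    ⟨⟨le_add_self, le_rfl⟩, fun e he _ => ?_⟩⟩
  exact ((hc.1 e he).2.trans_lt (Nat.lt_succ_self _)).ne

lemma isCriticalEdge_of_isProperColoringOn (hχ : G.chromIndex = k + 1) {f : G.E}
    (hc : G.IsProperColoringOn k {f}ᶜ c) : G.IsCriticalEdge k f := by
  refine ⟨le_antisymm (Nat.sInf_le ⟨c, hc⟩) ?_, hχ⟩
  have := G.chromIndexOn_insert_le f {f}ᶜ
  rw [Set.insert_compl_singleton] at this
  rw [chromIndex] at hχ
  omega

lemma mem_missingOn_rotate [DecidableEq G.E] {e f : G.E} {v : G.V} {γ : ℕ}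
    (hγ : γ ∈ G.missingOn k {e}ᶜ c v) (hγf : γ ≠ c f) :
    γ ∈ G.missingOn k {f}ᶜ (Function.update c e (c f)) v := by
  refine ⟨hγ.1, fun g hg hvg => ?_⟩
  rcases eq_or_ne g e with rfl | hge
  · simpa using hγf.symm
  · simpa [hge] using hγ.2 g hge hvg

lemma IsProperColoringOn.rotate [DecidableEq G.E] {e f : G.E} {x y : G.V}
    (hc : G.IsProperColoringOn k {e}ᶜ c) (he : G.ends e = s(x, y)) (hxf : x ∈ G.ends f)
    (hfe : f ≠ e) (hfy : c f ∈ G.missingOn k {e}ᶜ c y) :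
    G.IsProperColoringOn k {f}ᶜ (Function.update c e (c f)) := by
  have hD : insert e ({f}ᶜ \ {e}) = ({f}ᶜ : Set G.E) := by
    rw [Set.insert_sdiff_singleton, Set.insert_eq_of_mem hfe.symm]
  rw [← hD]
  refine (hc.subset fun g hg => hg.2).insert_update fun v hv => ?_
  rw [he, Sym2.mem_iff] at hv
  rcases hv with rfl | rfl
  · exact ⟨hc.1 f hfe, fun g hg hvg => hc.2 g hg.2 f hfe hg.1 ⟨v, hvg, hxf⟩⟩
  · exact missingOn_anti (fun g hg => hg.2) _ hfy

def ColorAdj (D : Set G.E) (c : G.E → ℕ) (γ : ℕ) (a b : G.V) : Prop :=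
  ∃ e ∈ D, G.ends e = s(a, b) ∧ c e = γ

lemma ColorAdj.symm {γ : ℕ} {a b : G.V} (h : G.ColorAdj D c γ a b) : G.ColorAdj D c γ b a :=
  let ⟨e, he, hab, hγ⟩ := h
  ⟨e, he, hab.trans Sym2.eq_swap, hγ⟩

lemma colorAdj_rightUnique (hc : G.IsProperColoringOn k D c) (γ : ℕ) :
    Relator.RightUnique (G.ColorAdj D c γ) := by
  rintro a b b' ⟨e, he, hab, rfl⟩ ⟨e', he', hab', hγ⟩
  obtain rfl : e = e' := by
    by_contra hne
    exact hc.2 e he e' he' hne ⟨a, hab ▸ Sym2.mem_mk_left _ _, hab' ▸ Sym2.mem_mk_left _ _⟩ hγ.symm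
  rw [hab] at hab'
  exact (Sym2.congr_right.mp hab')

lemma not_colorAdj_of_mem_missingOn {γ : ℕ} {a : G.V} (h : γ ∈ G.missingOn k D c a) (b : G.V) :
    ¬ G.ColorAdj D c γ a b :=
  fun ⟨e, he, hab, hγ⟩ => h.2 e he (hab ▸ Sym2.mem_mk_left _ _) hγ

lemma chainStep_eq_sup (α β : ℕ) :
    G.chainStep D c α β = G.ColorAdj D c α ⊔ G.ColorAdj D c β := by
  ext a b
  simp only [chainStep, ColorAdj, Pi.sup_apply, sup_Prop_eq, ← exists_or, ← and_or_left]

lemma sameChain_symm {α β : ℕ} {a b : G.V} (h : G.sameChain D c α β a b) :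
    G.sameChain D c α β b a :=
  Relation.ReflTransGen.mono (fun _ _ ⟨e, he, hab, hc⟩ => ⟨e, he, hab.trans Sym2.eq_swap, hc⟩) _ _
    (Relation.ReflTransGen.swap _ _ h)

open Classical in
/-- Interchanging `α` and `β` on the edges meeting `C`: a Kempe change when `C` is a union of
`(α,β)`-chains. -/
noncomputable def kempeSwap (c : G.E → ℕ) (α β : ℕ) (C : Set G.V) (f : G.E) : ℕ :=
  if ∃ w ∈ G.ends f, w ∈ C then Equiv.swap α β (c f) else c f

section Kempe

variable {α β : ℕ} {C : Set G.V}

lemma kempeSwap_of_mem {f : G.E} {w : G.V} (hw : w ∈ G.ends f) (hwC : w ∈ C) :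
    kempeSwap c α β C f = Equiv.swap α β (c f) :=
  if_pos ⟨w, hw, hwC⟩

lemma mem_missingOn_kempeSwap_of_mem {w : G.V} (hwC : w ∈ C) {γ : ℕ}
    (hγ : γ ∈ G.missingOn k D c w) (hα : α ∈ Set.Icc 1 k) (hβ : β ∈ Set.Icc 1 k) :
    Equiv.swap α β γ ∈ G.missingOn k D (kempeSwap c α β C) w :=
  ⟨Equiv.swap_apply_mem hα hβ hγ.1, fun f hf hwf => by
    rw [kempeSwap_of_mem hwf hwC]
    exact (Equiv.swap α β).injective.ne (hγ.2 f hf hwf)⟩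

variable (hC : ∀ w ∈ C, ∀ w', G.chainStep D c α β w w' → w' ∈ C)
include hC

lemma mem_of_chainStep_closed {f : G.E} (hf : f ∈ D) (hfc : c f = α ∨ c f = β) {v w : G.V}
    (hw : w ∈ G.ends f) (hwC : w ∈ C) (hv : v ∈ G.ends f) : v ∈ C := by
  obtain ⟨w', hw'⟩ := Sym2.mem_iff_exists.mp hw
  rw [hw', Sym2.mem_iff] at hv
  rcases hv with rfl | rfl
  exacts [hwC, hC _ hwC _ ⟨f, hf, hw', hfc⟩]

lemma kempeSwap_of_notMem {f : G.E} (hf : f ∈ D) {v : G.V} (hv : v ∈ G.ends f) (hvC : v ∉ C) :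
    kempeSwap c α β C f = c f := by
  unfold kempeSwap
  split_ifs with h
  · obtain ⟨w, hw, hwC⟩ := h
    apply Equiv.swap_apply_of_ne_of_ne <;> intro hfc <;>
      exact hvC (mem_of_chainStep_closed hC hf (by tauto) hw hwC hv)
  · rfl

lemma IsProperColoringOn.kempeSwap (hc : G.IsProperColoringOn k D c) (hα : α ∈ Set.Icc 1 k)
    (hβ : β ∈ Set.Icc 1 k) : G.IsProperColoringOn k D (kempeSwap c α β C) := by
  refine ⟨fun f hf => ?_, fun e he f hf hef hadj => ?_⟩
  · unfold Multigraph.kempeSwap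
    split_ifs
    exacts [Equiv.swap_apply_mem hα hβ (hc.1 f hf), hc.1 f hf]
  · obtain ⟨v, hve, hvf⟩ := hadj
    by_cases hvC : v ∈ C
    · rw [kempeSwap_of_mem hve hvC, kempeSwap_of_mem hvf hvC]
      exact (Equiv.swap α β).injective.ne (hc.2 e he f hf hef ⟨v, hve, hvf⟩)
    · rw [kempeSwap_of_notMem hC he hve hvC, kempeSwap_of_notMem hC hf hvf hvC]
      exact hc.2 e he f hf hef ⟨v, hve, hvf⟩

lemma mem_missingOn_kempeSwap_of_notMem {w : G.V} (hwC : w ∉ C) {γ : ℕ}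
    (hγ : γ ∈ G.missingOn k D c w) : γ ∈ G.missingOn k D (kempeSwap c α β C) w :=
  ⟨hγ.1, fun f hf hwf => by
    rw [kempeSwap_of_notMem hC hf hwf hwC]
    exact hγ.2 f hf hwf⟩

lemma mem_missingOn_kempeSwap_or {w : G.V} {γ : ℕ} (hγ : γ ∈ G.missingOn k D c w) (hγβ : γ ≠ β)
    (hα : α ∈ Set.Icc 1 k) (hβ : β ∈ Set.Icc 1 k) :
    γ ∈ G.missingOn k D (kempeSwap c α β C) w ∨ β ∈ G.missingOn k D (kempeSwap c α β C) w := by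
  by_cases hwC : w ∈ C
  · have := mem_missingOn_kempeSwap_of_mem hwC hγ hα hβ
    by_cases hγα : γ = α
    · rw [hγα, Equiv.swap_apply_left] at this
      exact Or.inr this
    · rw [Equiv.swap_apply_of_ne_of_ne hγα hγβ] at this
      exact Or.inl this
  · exact Or.inl (mem_missingOn_kempeSwap_of_notMem hC hwC hγ)

end Kempe

/-- Distinct edges `E i = edge i ∈ E_G(x, Y i)`, `Y i = vx i`, for `i ≤ n`. -/
structure EdgeSeq (G : Multigraph) (x : G.V) where
  n : ℕ
  edge : ℕ → G.E
  vx : ℕ → G.V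
  ends_edge : ∀ i ≤ n, G.ends (edge i) = s(x, vx i)
  injOn_edge : Set.InjOn edge (Set.Iic n)

namespace EdgeSeq

variable {x : G.V} (S : EdgeSeq G x)

/-- A multi-fan whose fan condition is always witnessed by the preceding vertex. -/
def IsLinearFan (k : ℕ) (c : G.E → ℕ) : Prop :=
  ∀ i < S.n, c (S.edge (i + 1)) ∈ G.missingOn k {S.edge 0}ᶜ c (S.vx i)

def take (m : ℕ) (hm : m ≤ S.n) : EdgeSeq G x :=
  ⟨m, S.edge, S.vx, fun i hi => S.ends_edge i (hi.trans hm),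
    S.injOn_edge.mono (Set.Iic_subset_Iic.mpr hm)⟩

def tail (hn : S.n ≠ 0) : EdgeSeq G x where
  n := S.n - 1
  edge i := S.edge (i + 1)
  vx i := S.vx (i + 1)
  ends_edge i hi := S.ends_edge (i + 1) (by omega)
  injOn_edge i hi j hj h := by
    simp only [Set.mem_Iic] at hi hj
    have := S.injOn_edge (Set.mem_Iic.mpr (by omega : i + 1 ≤ S.n))
      (Set.mem_Iic.mpr (by omega : j + 1 ≤ S.n)) h
    omega

variable {S}

lemma mem_ends_edge {i : ℕ} (hi : i ≤ S.n) : x ∈ G.ends (S.edge i) := by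
  rw [S.ends_edge i hi]; exact Sym2.mem_mk_left _ _

lemma edge_ne {i j : ℕ} (hi : i ≤ S.n) (hj : j ≤ S.n) (hij : i ≠ j) : S.edge i ≠ S.edge j :=
  fun h => hij (S.injOn_edge (Set.mem_Iic.mpr hi) (Set.mem_Iic.mpr hj) h)

lemma color_ne (hc : G.IsProperColoringOn k {S.edge 0}ᶜ c) {i j : ℕ} (hi : i ≤ S.n)
    (hj : j ≤ S.n) (hi0 : i ≠ 0) (hj0 : j ≠ 0) (hij : i ≠ j) : c (S.edge i) ≠ c (S.edge j) :=
  hc.2 _ (edge_ne hi (Nat.zero_le _) hi0) _ (edge_ne hj (Nat.zero_le _) hj0) (edge_ne hi hj hij)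
    ⟨x, mem_ends_edge hi, mem_ends_edge hj⟩

/-- Rotating a linear fan: recoloring each `E i` with the color of `E (i + 1)` uncolors `E n`
instead of `E 0`, and keeps every color missing at `x` missing wherever it was. -/
theorem IsLinearFan.exists_rotate (hc : G.IsProperColoringOn k {S.edge 0}ᶜ c)
    (hS : S.IsLinearFan k c) :
    ∃ c', G.IsProperColoringOn k {S.edge S.n}ᶜ c' ∧ ∀ γ ∈ G.missingOn k {S.edge 0}ᶜ c x,
      ∀ v, γ ∈ G.missingOn k {S.edge 0}ᶜ c v → γ ∈ G.missingOn k {S.edge S.n}ᶜ c' v := by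
  classical
  induction hn : S.n generalizing S c with
  | zero => exact ⟨c, hc, fun γ _ v hv => hv⟩
  | succ m ih =>
    have hS0 : S.n ≠ 0 := by omega
    have hf : S.edge 1 ≠ S.edge 0 := edge_ne (by omega) (by omega) one_ne_zero
    set c' := Function.update c (S.edge 0) (c (S.edge 1))
    have hc' : G.IsProperColoringOn k {(S.tail hS0).edge 0}ᶜ c' :=
      hc.rotate (S.ends_edge 0 (by omega)) (mem_ends_edge (by omega)) hf (hS 0 (by omega))
    have hS' : (S.tail hS0).IsLinearFan k c' := fun i hi => by
      have hi : i + 1 < S.n := by simp only [tail] at hi; omega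
      have hne : S.edge (i + 2) ≠ S.edge 0 := edge_ne (by omega) (Nat.zero_le _) (by omega)
      show c' (S.edge (i + 2)) ∈ G.missingOn k {S.edge 1}ᶜ c' (S.vx (i + 1))
      rw [show c' (S.edge (i + 2)) = c (S.edge (i + 2)) from Function.update_of_ne hne _ _]
      exact mem_missingOn_rotate (hS (i + 1) hi)
        (color_ne hc (by omega) (by omega) (by omega) one_ne_zero (by omega))
    obtain ⟨c'', hc'', hmiss⟩ := ih hc' hS' (by simp only [tail]; omega)
    refine ⟨c'', hc'', fun γ hγx v hγv => ?_⟩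
    have hγf : γ ≠ c (S.edge 1) := fun h => hγx.2 _ hf (mem_ends_edge (by omega)) h.symm
    exact hmiss γ (mem_missingOn_rotate hγx hγf) v (mem_missingOn_rotate hγv hγf)

theorem IsLinearFan.notMem_missingOn_last (hχ : G.chromIndex = k + 1)
    (hc : G.IsProperColoringOn k {S.edge 0}ᶜ c) (hS : S.IsLinearFan k c) {γ : ℕ}
    (hγ : γ ∈ G.missingOn k {S.edge 0}ᶜ c x) : γ ∉ G.missingOn k {S.edge 0}ᶜ c (S.vx S.n) := by
  classical
  intro hγn
  obtain ⟨c', hc', hmiss⟩ := hS.exists_rotate hc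
  have hG := hc'.insert_update (γ := γ) fun v hv => by
    rw [S.ends_edge _ le_rfl, Sym2.mem_iff] at hv
    rcases hv with rfl | rfl
    exacts [hmiss γ hγ _ hγ, hmiss γ hγ _ hγn]
  rw [Set.insert_compl_singleton] at hG
  have : G.chromIndex ≤ k := Nat.sInf_le ⟨_, hG⟩
  omega

theorem IsLinearFan.isCriticalEdge_last (hχ : G.chromIndex = k + 1)
    (hc : G.IsProperColoringOn k {S.edge 0}ᶜ c) (hS : S.IsLinearFan k c) :
    G.IsCriticalEdge k (S.edge S.n) :=
  isCriticalEdge_of_isProperColoringOn hχ (hS.exists_rotate hc).choose_spec.1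

lemma exists_take_isLinearFan {P : G.V → Prop} (h : ∀ i ≤ S.n, P (S.vx i) ∨
      i < S.n ∧ c (S.edge (i + 1)) ∈ G.missingOn k {S.edge 0}ᶜ c (S.vx i)) :
    ∃ m, ∃ hm : m ≤ S.n, (S.take m hm).IsLinearFan k c ∧ P (S.vx m) := by
  classical
  have hex : ∃ m, m ≤ S.n ∧ P (S.vx m) :=
    ⟨S.n, le_rfl, (h S.n le_rfl).resolve_right fun h => lt_irrefl _ h.1⟩
  obtain ⟨hm, hP⟩ := Nat.find_spec hex
  refine ⟨Nat.find hex, hm, fun i (hi : i < Nat.find hex) => ?_, hP⟩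
  exact ((h i (by omega)).resolve_left fun hPi => Nat.find_min hex hi ⟨by omega, hPi⟩).2

/-- Otherwise interchanging `α` and `β` on the `(α,β)`-chain through `z = Y n` leaves a linear
fan (cut at the first vertex where the fan condition breaks) ending at a vertex that misses
`β`, as `x` does. -/
theorem IsLinearFan.sameChain_last (hχ : G.chromIndex = k + 1)
    (hc : G.IsProperColoringOn k {S.edge 0}ᶜ c) (hS : S.IsLinearFan k c) {α β : ℕ}
    (hα : α ∈ G.missingOn k {S.edge 0}ᶜ c (S.vx S.n))
    (hβ : β ∈ G.missingOn k {S.edge 0}ᶜ c x) : G.sameChain {S.edge 0}ᶜ c α β x (S.vx S.n) := by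
  by_contra hx
  set C := {w | G.sameChain {S.edge 0}ᶜ c α β (S.vx S.n) w}
  have hC : ∀ w ∈ C, ∀ w', G.chainStep {S.edge 0}ᶜ c α β w w' → w' ∈ C :=
    fun _ hw _ h => hw.tail h
  have hxC : x ∉ C := fun h => hx (sameChain_symm h)
  have hedge : ∀ i ≤ S.n, i ≠ 0 → kempeSwap c α β C (S.edge i) = c (S.edge i) :=
    fun i hi hi0 => kempeSwap_of_notMem hC (edge_ne hi (Nat.zero_le _) hi0) (mem_ends_edge hi) hxC
  obtain ⟨m, hm, hS', hβm⟩ := S.exists_take_isLinearFan (k := k) (c := kempeSwap c α β C)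
    (P := fun v => β ∈ G.missingOn k {S.edge 0}ᶜ (kempeSwap c α β C) v) fun i hi => by
      rcases hi.lt_or_eq with hi | rfl
      · have hβi : c (S.edge (i + 1)) ≠ β :=
          fun h => hβ.2 _ (edge_ne hi (Nat.zero_le _) i.succ_ne_zero) (mem_ends_edge hi) h
        rw [hedge (i + 1) hi i.succ_ne_zero]
        exact (mem_missingOn_kempeSwap_or hC (hS i hi) hβi hα.1 hβ.1).symm.imp_right (⟨hi, ·⟩)
      · left
        have := mem_missingOn_kempeSwap_of_mem (C := C) Relation.ReflTransGen.refl hα hα.1 hβ.1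
        rwa [Equiv.swap_apply_left] at this
  exact IsLinearFan.notMem_missingOn_last (S := S.take m hm) hχ (hc.kempeSwap hC hα.1 hβ.1) hS'
    (mem_missingOn_kempeSwap_of_notMem hC hxC hβ) hβm

end EdgeSeq

namespace MultiFan

variable {x y : G.V} {e₀ : G.E}

lemma exists_chain (F : MultiFan G k D c x e₀ y) (j : Fin (F.p + 1)) :
    ∃ n, ∃ ι : ℕ → Fin (F.p + 1), ι 0 = 0 ∧ ι n = j ∧ StrictMonoOn ι (Set.Iic n) ∧
      ∀ i < n, c (F.edge (ι (i + 1))) ∈ G.missingOn k D c (F.vx (ι i)) := by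
  induction j using WellFoundedLT.induction with
  | _ j ih =>
  rcases eq_or_ne j 0 with rfl | hj
  · exact ⟨0, fun _ => 0, rfl, rfl, fun a ha b hb hab => by simp_all,
      fun i hi => absurd hi i.not_lt_zero⟩
  obtain ⟨j', hj', hmiss⟩ := F.fan_cond j hj
  obtain ⟨n, ι, h0, hn, hmono, hcond⟩ := ih j' hj'
  have hle : ∀ i ≤ n, ι i ≤ j' := fun i hi =>
    hn ▸ hmono.monotoneOn (Set.mem_Iic.mpr hi) (Set.mem_Iic.mpr le_rfl) hi
  refine ⟨n + 1, Function.update ι (n + 1) j, by simp [h0], by simp, ?_, fun i hi => ?_⟩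
  · intro a ha b hb hab
    simp only [Set.mem_Iic] at ha hb
    rcases eq_or_ne b (n + 1) with rfl | hb'
    · simpa [hab.ne] using (hle a (by omega)).trans_lt hj'
    · simpa [hb', (hab.trans_le le_rfl).ne.symm, show a ≠ n + 1 by omega] using
        hmono (Set.mem_Iic.mpr (by omega)) (Set.mem_Iic.mpr (by omega)) hab
  · rcases eq_or_ne i n with rfl | hin
    · simpa [hn] using hmiss
    · rw [Function.update_of_ne (show i + 1 ≠ n + 1 by omega),
        Function.update_of_ne (show i ≠ n + 1 by omega)]
      exact hcond i (by omega)

lemma exists_isLinearFan (F : MultiFan G k {e₀}ᶜ c x e₀ y) (j : Fin (F.p + 1)) :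
    ∃ S : EdgeSeq G x, S.edge 0 = e₀ ∧ S.IsLinearFan k c ∧ S.edge S.n = F.edge j ∧
      S.vx S.n = F.vx j := by
  obtain ⟨n, ι, h0, hn, hmono, hcond⟩ := F.exists_chain j
  have hS0 : F.edge (ι 0) = e₀ := by rw [h0, F.edge_zero]
  refine ⟨⟨n, F.edge ∘ ι, F.vx ∘ ι, fun i _ => F.ends_eq _, F.edge_inj.comp_injOn hmono.injOn⟩,
    hS0, fun i hi => ?_, by simp [hn], by simp [hn]⟩
  show c (F.edge (ι (i + 1))) ∈ G.missingOn k {F.edge (ι 0)}ᶜ c (F.vx (ι i))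
  rw [hS0]
  exact hcond i hi

variable (hχ : G.chromIndex = k + 1) (hc : G.IsProperColoringOn k {e₀}ᶜ c)
  (F : MultiFan G k {e₀}ᶜ c x e₀ y)
include hχ hc

lemma isCriticalEdge_edge (j : Fin (F.p + 1)) : G.IsCriticalEdge k (F.edge j) := by
  obtain ⟨S, rfl, hS, hedge, -⟩ := F.exists_isLinearFan j
  exact hedge ▸ hS.isCriticalEdge_last hχ hc

lemma notMem_missingOn_vx (j : Fin (F.p + 1)) {γ : ℕ} (hγ : γ ∈ G.missingOn k {e₀}ᶜ c x) :
    γ ∉ G.missingOn k {e₀}ᶜ c (F.vx j) := by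
  obtain ⟨S, rfl, hS, -, hvx⟩ := F.exists_isLinearFan j
  exact hvx ▸ hS.notMem_missingOn_last hχ hc hγ

lemma sameChain_vx (j : Fin (F.p + 1)) {α β : ℕ} (hα : α ∈ G.missingOn k {e₀}ᶜ c (F.vx j))
    (hβ : β ∈ G.missingOn k {e₀}ᶜ c x) : G.sameChain {e₀}ᶜ c α β x (F.vx j) := by
  obtain ⟨S, rfl, hS, -, hvx⟩ := F.exists_isLinearFan j
  rw [← hvx] at hα ⊢
  exact hS.sameChain_last hχ hc hα hβ

/-- By `sameChain_vx` both vertices lie on the `(α,β)`-chain through `x`, a path on which `x` and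
both of them have degree at most one. -/
lemma vx_eq_of_mem_missingOn {i j : Fin (F.p + 1)} {α β : ℕ}
    (hi : α ∈ G.missingOn k {e₀}ᶜ c (F.vx i)) (hj : α ∈ G.missingOn k {e₀}ᶜ c (F.vx j))
    (hβ : β ∈ G.missingOn k {e₀}ᶜ c x) : F.vx i = F.vx j := by
  have hchain : ∀ j, α ∈ G.missingOn k {e₀}ᶜ c (F.vx j) →
      Relation.ReflTransGen (G.ColorAdj {e₀}ᶜ c α ⊔ G.ColorAdj {e₀}ᶜ c β) x (F.vx j) :=
    fun j hj => by rw [← chainStep_eq_sup]; exact F.sameChain_vx hχ hc j hj hβ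
  exact Relation.eq_of_reflTransGen_sup (fun _ _ => ColorAdj.symm) (colorAdj_rightUnique hc α)
    (fun _ _ => ColorAdj.symm) (colorAdj_rightUnique hc β) (not_colorAdj_of_mem_missingOn hβ)
    (not_colorAdj_of_mem_missingOn hi) (not_colorAdj_of_mem_missingOn hj)
    (ne_of_ends_eq (F.ends_eq i)).symm (ne_of_ends_eq (F.ends_eq j)).symm
    (hchain i hi) (hchain j hj)

end MultiFan

end Multigraph

theorem multifan_elementary_critical_general (G : Multigraph) (k : ℕ)
    (x y : G.V) (e₀ : G.E)
    (hΔ : G.maxDegree ≤ k) (he : G.IsCriticalEdge k e₀)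
    (φ : G.E → ℕ) (hφ : G.IsProperColoringOn k {e₀}ᶜ φ)
    (F : Multigraph.MultiFan G k {e₀}ᶜ φ x e₀ y) :
    G.IsElementaryOn k {e₀}ᶜ φ F.verts ∧ ∀ j, G.IsCriticalEdge k (F.edge j) := by
  have hχ := he.2
  refine ⟨fun u hu v hv huv => Set.eq_empty_iff_forall_notMem.mpr ?_, F.isCriticalEdge_edge hχ hφ⟩
  rintro γ ⟨hγu, hγv⟩
  have hxe₀ : x ∈ G.ends e₀ := by rw [← F.edge_zero, F.ends_eq]; exact Sym2.mem_mk_left _ _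
  obtain ⟨β, hβ⟩ : ∃ β, β ∈ G.missingOn k {e₀}ᶜ φ x := Multigraph.exists_mem_missingOn
    ((Multigraph.degree_le_maxDegree x).trans hΔ) (by simp) hxe₀
  rcases hu with rfl | ⟨i, rfl⟩ <;> rcases hv with rfl | ⟨j, rfl⟩
  · exact huv rfl
  · exact F.notMem_missingOn_vx hχ hφ j hγu hγv
  · exact F.notMem_missingOn_vx hχ hφ i hγv hγu
  · exact huv (F.vx_eq_of_mem_missingOn hχ hφ hγu hγv hβ)

/-- **Lemma 3.1(a).** Let `e ∈ E_G(x,y)` be a `k`-critical edge with `k ≥ Δ(G)`, let `φ` be a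
`k`-edge-coloring of `G-e` and let `F` be a multi-fan at `x` with respect to `e` and `φ`.
Then `V(F)` is `φ`-elementary and every edge of `F` is a `k`-critical edge of `G`. -/
theorem multifan_elementary_critical (G : Multigraph) (k : ℕ)
    (x y : G.V) (e₀ : G.E) (hends : G.ends e₀ = s(x, y))
    (hΔ : G.maxDegree ≤ k) (he : G.IsCriticalEdge k e₀)
    (φ : G.E → ℕ) (hφ : G.IsProperColoringOn k {e₀}ᶜ φ)
    (F : Multigraph.MultiFan G k {e₀}ᶜ φ x e₀ y) :
    G.IsElementaryOn k {e₀}ᶜ φ F.verts ∧ ∀ j, G.IsCriticalEdge k (F.edge j) :=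
  multifan_elementary_critical_general G k x y e₀ hΔ he φ hφ F
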